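/- Let (X, X¹) and (X, X²) be relative pairs of precubical sets. Then (X¹, X¹ ∩ X²) and (X², X¹ ∩ X²) are relative pairs. -/

import Mathlib

/-- A precubical set: a graded set `cells n` with boundary operators
`d ε i : cells (n+1) → cells n` for `ε ∈ {0,1}` (encoded by `Bool`) and `i < n+1`,
satisfying the precubical relations `dᵏᵢ ∘ dˡⱼ = dˡⱼ₋₁ ∘ dᵏᵢ` for `i < j`. -/
structure Precubical where
  cells : ℕ → Type
  d : Bool → ∀ {n : ℕ}, Fin (n + 1) → cells (n + 1) → cells n
  comm : ∀ {n : ℕ} (ε ε' : Bool) (i j : ℕ) (hij : i < j) (hj : j < n + 2)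
    (x : cells (n + 2)),
    d ε ⟨i, by omega⟩ (d ε' ⟨j, hj⟩ x) = d ε' ⟨j - 1, by omega⟩ (d ε ⟨i, by omega⟩ x)

namespace Precubical

variable (X : Precubical)

/-- The total boundary vertex `d⁰` (for `ε = false`) resp. `d¹` (for `ε = true`) of a cube. -/
def vert (ε : Bool) : ∀ {n : ℕ}, X.cells n → X.cells 0
  | 0, x => x
  | _ + 1, x => vert ε (X.d ε 0 x)

/-- A cube of dimension at least one, together with its dimension (a cell of `X_{m+1}` is
recorded as `⟨m, c⟩`, so that it contributes `m` to the dimension of a cube chain). -/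
abbrev CellPos := Σ m : ℕ, X.cells (m + 1)

/-- The start vertex `d⁰(c)` of a cube. -/
def src (c : X.CellPos) : X.cells 0 := X.vert false c.2

/-- The end vertex `d¹(c)` of a cube. -/
def tgt (c : X.CellPos) : X.cells 0 := X.vert true c.2

/-- `X.Fits v l` states that the list of cubes `l` is a cube chain starting at the vertex `v`:
the start vertex of the first cube is `v` and the end vertex of each cube is the start vertex
of the next one. -/
def Fits : X.cells 0 → List X.CellPos → Prop
  | _, [] => True
  | v, c :: l => X.src c = v ∧ Fits (X.tgt c) l

/-- The end vertex of a cube chain starting at `v`. -/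
def endpt : X.cells 0 → List X.CellPos → X.cells 0
  | v, [] => v
  | _, c :: l => endpt (X.tgt c) l

/-- The dimension of a cube chain `(c₁, …, c_l)` with `c_k ∈ X_{n_k}`: `n₁ + ⋯ + n_l - l`. -/
def dimL (l : List X.CellPos) : ℕ := (l.map Sigma.fst).sum

/-- A cube chain of `X` (from the vertex `v` to the vertex `X.endpt v l`). -/
def CChain := {p : X.cells 0 × List X.CellPos // X.Fits p.1 p.2}

/-- The start vertex of a cube chain. -/
def CChain.v {X : Precubical} (c : CChain X) : X.cells 0 := c.1.1

/-- The list of cubes of a cube chain. -/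
def CChain.l {X : Precubical} (c : CChain X) : List X.CellPos := c.1.2

/-- The end vertex of a cube chain. -/
def CChain.w {X : Precubical} (c : CChain X) : X.cells 0 := X.endpt c.v c.l

/-- The dimension of a cube chain. -/
def CChain.dim {X : Precubical} (c : CChain X) : ℕ := X.dimL c.l

/-- The cube chains of `X` of dimension `i`. -/
def ChainOfDim (i : ℕ) := {c : CChain X // c.dim = i}

end Precubical

namespace Precubical

variable (X : Precubical)

/-- The source vertex of an edge (a `1`-cell). -/
def esrc (c : X.cells 1) : X.cells 0 := X.d false 0 c

/-- The target vertex of an edge (a `1`-cell). -/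
def etgt (c : X.cells 1) : X.cells 0 := X.d true 0 c

/-- `X.EFits v l`: the list of edges `l` is a directed edge path starting at the vertex `v`. -/
def EFits : X.cells 0 → List (X.cells 1) → Prop
  | _, [] => True
  | v, c :: l => X.esrc c = v ∧ EFits (X.etgt c) l

/-- The end vertex of a directed edge path starting at `v`. -/
def eendpt : X.cells 0 → List (X.cells 1) → X.cells 0
  | v, [] => v
  | _, c :: l => eendpt (X.etgt c) l

/-- A family of subsets `S n ⊆ X n` is a sub-precubical set when it is closed under all
boundary operators. -/
def IsSubPrecubical (S : ∀ n, Set (X.cells n)) : Prop :=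
  ∀ (ε : Bool) (n : ℕ) (i : Fin (n + 1)) (x : X.cells (n + 1)), x ∈ S (n + 1) → X.d ε i x ∈ S n

/-- `X.IsRelPairWithin S T`: the pair `(S, T)` (with `T ⊆ S` sub-precubical sets of `X`) is a
relative pair: every directed edge path of `S` which starts (resp. ends) at a vertex of `T`
admits an index `k` such that all earlier edges lie in `T` and all later edges lie outside `T`
(resp. symmetrically); i.e., directed paths of `S` enter and exit `T` at most once. -/
def IsRelPairWithin (S T : ∀ n, Set (X.cells n)) : Prop :=
  ∀ (v : X.cells 0) (l : List (X.cells 1)),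
    X.EFits v l → v ∈ S 0 → (∀ c ∈ l, c ∈ S 1) →
    (v ∈ T 0 →
      ∃ k : ℕ, (∀ idx : Fin l.length, (idx : ℕ) < k → l.get idx ∈ T 1) ∧
        (∀ idx : Fin l.length, k < (idx : ℕ) → l.get idx ∉ T 1)) ∧
    (X.eendpt v l ∈ T 0 →
      ∃ k : ℕ, (∀ idx : Fin l.length, (idx : ℕ) < k → l.get idx ∉ T 1) ∧
        (∀ idx : Fin l.length, k < (idx : ℕ) → l.get idx ∈ T 1))

/-- The full sub-precubical set `X ⊆ X`. -/
def fullSub : ∀ n, Set (X.cells n) := fun _ => Set.univ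

end Precubical

open Precubical

namespace Precubical

variable {X : Precubical}

/-- An edge path of `S` has all its edges in `S`, so it meets `S ∩ T` exactly where it meets
`T`. -/
theorem IsRelPairWithin.inter_of_subset {S S' T : ∀ n, Set (X.cells n)}
    (hrel : X.IsRelPairWithin S' T) (hS : ∀ n, S n ⊆ S' n) :
    X.IsRelPairWithin S (fun n => S n ∩ T n) := by
  intro v l hfits hvS hlS
  have hl : ∀ idx : Fin l.length, l.get idx ∈ S 1 := fun idx => hlS _ (l.get_mem idx)
  obtain ⟨hstart, hend⟩ := hrel v l hfits (hS 0 hvS) (fun c hc => hS 1 (hlS c hc))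
  refine ⟨fun hv => ?_, fun hw => ?_⟩
  · obtain ⟨k, hin, hout⟩ := hstart hv.2
    exact ⟨k, fun idx h => ⟨hl idx, hin idx h⟩, fun idx h hm => hout idx h hm.2⟩
  · obtain ⟨k, hout, hin⟩ := hend hw.2
    exact ⟨k, fun idx h hm => hout idx h hm.2, fun idx h => ⟨hl idx, hin idx h⟩⟩

end Precubical

theorem relPair_inter_general (X : Precubical) (S₁ S₂ : ∀ n, Set (X.cells n))
    (hrel₁ : X.IsRelPairWithin (X.fullSub) S₁)
    (hrel₂ : X.IsRelPairWithin (X.fullSub) S₂) :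
    X.IsRelPairWithin S₁ (fun n => S₁ n ∩ S₂ n) ∧
    X.IsRelPairWithin S₂ (fun n => S₁ n ∩ S₂ n) := by
  have hcomm : (fun n => S₂ n ∩ S₁ n) = fun n => S₁ n ∩ S₂ n :=
    funext fun _ => Set.inter_comm _ _
  exact ⟨hrel₂.inter_of_subset fun _ => Set.subset_univ _,
    hcomm ▸ hrel₁.inter_of_subset fun _ => Set.subset_univ _⟩

/-- If `(X, X¹)` and `(X, X²)` are relative pairs of precubical sets, then
`(X¹, X¹ ∩ X²)` and `(X², X¹ ∩ X²)` are relative pairs. -/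
theorem relPair_inter (X : Precubical) (S₁ S₂ : ∀ n, Set (X.cells n))
    (h₁ : X.IsSubPrecubical S₁) (h₂ : X.IsSubPrecubical S₂)
    (hrel₁ : X.IsRelPairWithin (X.fullSub) S₁)
    (hrel₂ : X.IsRelPairWithin (X.fullSub) S₂) :
    X.IsRelPairWithin S₁ (fun n => S₁ n ∩ S₂ n) ∧
    X.IsRelPairWithin S₂ (fun n => S₁ n ∩ S₂ n) :=
  relPair_inter_general X S₁ S₂ hrel₁ hrel₂
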